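/- arXiv:1605.01997 — 4 statements merged into one kernel-verified Lean document; each statement's English description precedes it below -/
import Mathlib

section
/- Bernstein-type binomial tail bound: for an integer q ≥ 1, x, y ∈ (0,1) with x ≤ y, the probability P(Bin(q,x) ≥ qy) = Σ_{j=⌈qy⌉}^{q} C(q,j)·x^j·(1-x)^{q-j} is at most exp(-q·d(y,x)), where d(y,x) = (1/2)(y-x)²/(x(1-x)+(1-2x)(y-x)/3). -/
/-!
The Chernoff bound with the optimal tilt `log (y (1 - x) / (x (1 - y)))` bounds the tail by
`exp (-q KL(y ‖ x))`. It remains to show `d(y, x) ≤ KL(y ‖ x)`. Both sides vanish at `y = x`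
together with their `y`-derivatives, and the second derivatives compare as
`(x (1 - x))² / D³ ≤ 1 / (s (1 - s))`, where `D = x (1 - x) + (1 - 2x)(s - x) / 3`; this
is the polynomial inequality `(x (1 - x))² s (1 - s) ≤ D³`, whose difference is `(s - x)²`
times a factor that is affine in `s` and nonnegative at `s = x` and at `s = 1`.
-/

/-- The Bernstein-type rate function `d(y,x)`. -/
noncomputable def dLow (y x : ℝ) : ℝ :=
  (1 / 2) * (y - x) ^ 2 / (x * (1 - x) + (1 - 2 * x) * (y - x) / 3)

open Real Set Finset

lemma monotoneOn_Icc_of_hasDerivAt {f f' : ℝ → ℝ} {a b : ℝ}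
    (hf : ∀ t ∈ Icc a b, HasDerivAt f (f' t) t) (hf' : ∀ t ∈ Ioo a b, 0 ≤ f' t) :
    MonotoneOn f (Icc a b) := by
  refine monotoneOn_of_hasDerivWithinAt_nonneg (convex_Icc a b)
    (fun t ht => (hf t ht).continuousAt.continuousWithinAt) (fun t ht => ?_) (by simpa using hf')
  rw [interior_Icc] at ht
  exact (hf t (Ioo_subset_Icc_self ht)).hasDerivWithinAt

lemma le_of_hasDerivAt_of_hasDerivAt_nonneg {f f' f'' : ℝ → ℝ} {a b : ℝ} (hab : a ≤ b)
    (hf : ∀ t ∈ Icc a b, HasDerivAt f (f' t) t) (hf' : ∀ t ∈ Icc a b, HasDerivAt f' (f'' t) t)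
    (hf'' : ∀ t ∈ Ioo a b, 0 ≤ f'' t) (hf'a : f' a = 0) : f a ≤ f b := by
  have hf'_nonneg : ∀ t ∈ Icc a b, 0 ≤ f' t := fun t ht =>
    hf'a ▸ monotoneOn_Icc_of_hasDerivAt hf' hf'' (left_mem_Icc.2 (ht.1.trans ht.2)) ht ht.1
  exact monotoneOn_Icc_of_hasDerivAt hf (fun t ht => hf'_nonneg t (Ioo_subset_Icc_self ht))
    (left_mem_Icc.2 hab) (right_mem_Icc.2 hab) hab

noncomputable def bernoulliKL (y x : ℝ) : ℝ :=
  y * (log y - log x) + (1 - y) * (log (1 - y) - log (1 - x))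

lemma sum_choose_mul_le_exp_mul_pow {x l : ℝ} (hx0 : 0 ≤ x) (hx1 : x ≤ 1) (hl : 0 ≤ l)
    (q : ℕ) (t : ℝ) :
    ∑ j ∈ Icc ⌈(q : ℝ) * t⌉₊ q, (q.choose j : ℝ) * x ^ j * (1 - x) ^ (q - j)
      ≤ exp (-(l * (q * t))) * (x * exp l + (1 - x)) ^ q := by
  have hterm : ∀ j, 0 ≤ (q.choose j : ℝ) * x ^ j * (1 - x) ^ (q - j) := fun j => by
    have : 0 ≤ 1 - x := by linarith
    positivity
  calc ∑ j ∈ Icc ⌈(q : ℝ) * t⌉₊ q, (q.choose j : ℝ) * x ^ j * (1 - x) ^ (q - j)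
      ≤ ∑ j ∈ Icc ⌈(q : ℝ) * t⌉₊ q,
          exp (l * (j - q * t)) * ((q.choose j : ℝ) * x ^ j * (1 - x) ^ (q - j)) := by
        refine sum_le_sum fun j hj => le_mul_of_one_le_left (hterm j) (one_le_exp ?_)
        have : (q : ℝ) * t ≤ j := Nat.ceil_le.1 (mem_Icc.1 hj).1
        exact mul_nonneg hl (by linarith)
    _ ≤ ∑ j ∈ range (q + 1),
          exp (l * (j - q * t)) * ((q.choose j : ℝ) * x ^ j * (1 - x) ^ (q - j)) := by
        refine sum_le_sum_of_subset_of_nonneg (fun j hj => ?_) fun j _ _ => by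
          have := hterm j
          positivity
        rw [Finset.mem_range]
        have := (mem_Icc.1 hj).2
        omega
    _ = exp (-(l * (q * t))) * (x * exp l + (1 - x)) ^ q := by
        rw [add_pow, mul_sum]
        refine sum_congr rfl fun j _ => ?_
        rw [mul_sub, sub_eq_add_neg, exp_add, mul_pow, ← exp_nat_mul, mul_comm (j : ℝ) l]
        ring

lemma exp_mul_pow_eq_exp_bernoulliKL {x y : ℝ} (hx0 : 0 < x) (hx1 : x < 1) (hy0 : 0 < y)
    (hy1 : y < 1) (q : ℕ) :
    exp (-(log (y * (1 - x) / (x * (1 - y))) * (q * y)))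
        * (x * exp (log (y * (1 - x) / (x * (1 - y)))) + (1 - x)) ^ q
      = exp (-q * bernoulliKL y x) := by
  have h1x : 0 < 1 - x := by linarith
  have h1y : 0 < 1 - y := by linarith
  have hbase : x * exp (log (y * (1 - x) / (x * (1 - y)))) + (1 - x)
      = exp (log (1 - x) - log (1 - y)) := by
    rw [exp_log (by positivity), ← log_div h1x.ne' h1y.ne', exp_log (by positivity)]
    field_simp
    ring
  rw [hbase, ← exp_nat_mul, ← exp_add, log_div (by positivity) (by positivity),
    log_mul hy0.ne' h1x.ne', log_mul hx0.ne' h1y.ne', bernoulliKL]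
  ring_nf

noncomputable def dLowDenom (x s : ℝ) : ℝ := x * (1 - x) + (1 - 2 * x) * (s - x) / 3

section
variable {x : ℝ}

lemma hasDerivAt_dLowDenom (s : ℝ) : HasDerivAt (dLowDenom x) ((1 - 2 * x) / 3) s :=
  ((((hasDerivAt_id s).sub_const x).const_mul (1 - 2 * x)).div_const 3).const_add (x * (1 - x))
    |>.congr_deriv (by ring)

lemma hasDerivAt_one_sub (s : ℝ) : HasDerivAt (fun s : ℝ => 1 - s) (-1) s := by
  simpa using (hasDerivAt_id s).const_sub 1

lemma hasDerivAt_bernoulliKL_left {s : ℝ} (hs0 : 0 < s) (hs1 : s < 1) :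
    HasDerivAt (fun s => bernoulliKL s x) (log s - log x - (log (1 - s) - log (1 - x))) s := by
  have h1s : 1 - s ≠ 0 := by linarith
  have hlog1s := (hasDerivAt_log h1s).comp s (hasDerivAt_one_sub s)
  refine ((hasDerivAt_id s).mul ((hasDerivAt_log hs0.ne').sub_const (log x))).add
    ((hasDerivAt_one_sub s).mul (hlog1s.sub_const (log (1 - x)))) |>.congr_deriv ?_
  simp only [Function.comp_apply, id]
  field_simp
  ring

lemma hasDerivAt_bernoulliKL_left_deriv {s : ℝ} (hs0 : 0 < s) (hs1 : s < 1) :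
    HasDerivAt (fun s => log s - log x - (log (1 - s) - log (1 - x))) (1 / s + 1 / (1 - s)) s := by
  have h1s : 1 - s ≠ 0 := by linarith
  have hlog1s := (hasDerivAt_log h1s).comp s (hasDerivAt_one_sub s)
  refine ((hasDerivAt_log hs0.ne').sub_const (log x)).sub (hlog1s.sub_const (log (1 - x)))
    |>.congr_deriv ?_
  field_simp
  ring

lemma hasDerivAt_dLow_left {s : ℝ} (hD : dLowDenom x s ≠ 0) :
    HasDerivAt (fun s => dLow s x)
      ((s - x) / dLowDenom x s - (1 - 2 * x) * (s - x) ^ 2 / (6 * dLowDenom x s ^ 2)) s := by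
  refine ((((hasDerivAt_id s).sub_const x).pow 2).const_mul (1 / 2)).div
    (hasDerivAt_dLowDenom s) hD |>.congr_deriv ?_
  simp only [id, Pi.pow_apply]
  field_simp
  ring

lemma hasDerivAt_dLow_left_deriv {s : ℝ} (hD : dLowDenom x s ≠ 0) :
    HasDerivAt
      (fun s => (s - x) / dLowDenom x s - (1 - 2 * x) * (s - x) ^ 2 / (6 * dLowDenom x s ^ 2))
      ((x * (1 - x)) ^ 2 / dLowDenom x s ^ 3) s := by
  have hsx := (hasDerivAt_id s).sub_const x
  refine (hsx.div (hasDerivAt_dLowDenom s) hD).sub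
    (((hsx.pow 2).const_mul (1 - 2 * x)).div (((hasDerivAt_dLowDenom s).pow 2).const_mul 6)
      (by simp [hD])) |>.congr_deriv ?_
  simp only [id, Pi.pow_apply]
  field_simp
  unfold dLowDenom
  ring

lemma sq_mul_le_dLowDenom_pow_three (hx0 : 0 < x) {s : ℝ} (hxs : x ≤ s) (hs1 : s < 1) :
    (x * (1 - x)) ^ 2 * (s * (1 - s)) ≤ dLowDenom x s ^ 3 := by
  have hv : 0 ≤ x * (1 - x) := mul_nonneg hx0.le (by linarith)
  have hcubic : 0 ≤ (x * (1 - x)) ^ 2 + x * (1 - x) * (1 - 2 * x) ^ 2 / 3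
      + (1 - 2 * x) ^ 3 * (s - x) / 27 := by
    rcases le_or_gt 0 (1 - 2 * x) with hb | hb
    · have : 0 ≤ (1 - 2 * x) ^ 3 * (s - x) := mul_nonneg (pow_nonneg hb 3) (by linarith)
      nlinarith [mul_nonneg hv (sq_nonneg (1 - 2 * x))]
    · have hb3 : (1 - 2 * x) ^ 3 ≤ 0 := by nlinarith [sq_nonneg (1 - 2 * x)]
      have : (1 - 2 * x) ^ 3 * (1 - x) ≤ (1 - 2 * x) ^ 3 * (s - x) :=
        mul_le_mul_of_nonpos_left (by linarith) hb3
      nlinarith [mul_nonneg (by linarith : (0 : ℝ) ≤ 1 - x)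
        (mul_nonneg (sq_nonneg (1 - 2 * x)) (by linarith : (0 : ℝ) ≤ 7 * x + 1))]
  have key : dLowDenom x s ^ 3 - (x * (1 - x)) ^ 2 * (s * (1 - s)) = (s - x) ^ 2 *
      ((x * (1 - x)) ^ 2 + x * (1 - x) * (1 - 2 * x) ^ 2 / 3 + (1 - 2 * x) ^ 3 * (s - x) / 27) := by
    unfold dLowDenom
    ring
  nlinarith [mul_nonneg (sq_nonneg (s - x)) hcubic]

lemma dLow_le_bernoulliKL (hx0 : 0 < x) {y : ℝ} (hxy : x ≤ y) (hy1 : y < 1) :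
    dLow y x ≤ bernoulliKL y x := by
  have hD : ∀ s ∈ Icc x y, 0 < dLowDenom x s := fun s hs => by
    unfold dLowDenom
    nlinarith [hs.1, hs.2]
  have hs0 : ∀ s ∈ Icc x y, 0 < s := fun s hs => hx0.trans_le hs.1
  have hs1 : ∀ s ∈ Icc x y, s < 1 := fun s hs => hs.2.trans_lt hy1
  suffices bernoulliKL x x - dLow x x ≤ bernoulliKL y x - dLow y x by
    simpa [bernoulliKL, dLow] using this
  refine le_of_hasDerivAt_of_hasDerivAt_nonneg hxy
    (fun s hs => (hasDerivAt_bernoulliKL_left (hs0 s hs) (hs1 s hs)).sub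
      (hasDerivAt_dLow_left (hD s hs).ne'))
    (fun s hs => (hasDerivAt_bernoulliKL_left_deriv (hs0 s hs) (hs1 s hs)).sub
      (hasDerivAt_dLow_left_deriv (hD s hs).ne')) (fun s hs => ?_) (by simp)
  have hs := Ioo_subset_Icc_self hs
  have h1s : 0 < 1 - s := by linarith [hs1 s hs]
  have := hD s hs
  rw [sub_nonneg, div_add_div _ _ (hs0 s hs).ne' h1s.ne',
    div_le_div_iff₀ (by positivity) (mul_pos (hs0 s hs) h1s)]
  nlinarith [sq_mul_le_dLowDenom_pow_three hx0 hs.1 (hs1 s hs)]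

end

theorem stmt_8_general (q : ℕ) (x y : ℝ) (hx : x ∈ Set.Ioo (0 : ℝ) 1)
    (hy : y ∈ Set.Ioo (0 : ℝ) 1) (hxy : x ≤ y) :
    ∑ j ∈ Finset.Icc ⌈(q : ℝ) * y⌉₊ q, (q.choose j : ℝ) * x ^ j * (1 - x) ^ (q - j)
      ≤ Real.exp (-(q : ℝ) * dLow y x) := by
  obtain ⟨hx0, hx1⟩ := hx
  obtain ⟨hy0, hy1⟩ := hy
  set l := log (y * (1 - x) / (x * (1 - y)))
  have hl : 0 ≤ l :=
    log_nonneg ((one_le_div (by nlinarith)).2 (by nlinarith))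
  calc ∑ j ∈ Finset.Icc ⌈(q : ℝ) * y⌉₊ q, (q.choose j : ℝ) * x ^ j * (1 - x) ^ (q - j)
      ≤ exp (-(l * (q * y))) * (x * exp l + (1 - x)) ^ q :=
        sum_choose_mul_le_exp_mul_pow hx0.le hx1.le hl q y
    _ = exp (-q * bernoulliKL y x) := exp_mul_pow_eq_exp_bernoulliKL hx0 hx1 hy0 hy1 q
    _ ≤ exp (-q * dLow y x) :=
        exp_le_exp.2 (mul_le_mul_of_nonpos_left (dLow_le_bernoulliKL hx0 hxy hy1) (by simp))

theorem stmt_8 (q : ℕ) (hq : 1 ≤ q) (x y : ℝ) (hx : x ∈ Set.Ioo (0 : ℝ) 1)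
    (hy : y ∈ Set.Ioo (0 : ℝ) 1) (hxy : x ≤ y) :
    ∑ j ∈ Finset.Icc ⌈(q : ℝ) * y⌉₊ q, (q.choose j : ℝ) * x ^ j * (1 - x) ^ (q - j)
      ≤ Real.exp (-(q : ℝ) * dLow y x) :=
  stmt_8_general q x y hx hy hxy
end

section
/- For x ∈ (0,1), y ∈ (0,1) with x ≤ y, the derivative with respect to x of d(y,x) - D(y‖x) equals (1-x(1-x))·(y-x)³ / (x·(1-x)·(y - x(x+2y-2))²), and in particular this derivative is nonnegative. -/
/-- Bernoulli Kullback-Leibler divergence `D(y‖x)`. -/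
noncomputable def bernKL (y x : ℝ) : ℝ :=
  y * Real.log (y / x) + (1 - y) * Real.log ((1 - y) / (1 - x))

/-!
With `Q = y - x (x + 2y - 2)`, three times the denominator of `d`, we have
`d(y,x) = (3/2) (y - x)² / Q` and `∂ₓ D(y‖x) = (x - y) / (x (1 - x))`, so the derivative of the
difference is a rational-function identity. `Q` is affine in `y`, with the positive values
`x (2 - x)` at `y = 0` and `1 - x²` at `y = 1`, hence `Q > 0` and the sign is that of `(y - x)³`.
-/

open Real Set

theorem dLow_eq_div (y : ℝ) :
    dLow y = fun x => 3 / 2 * (y - x) ^ 2 / (y - x * (x + 2 * y - 2)) := by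
  funext x
  rw [dLow, show x * (1 - x) + (1 - 2 * x) * (y - x) / 3 = (y - x * (x + 2 * y - 2)) / 3 by ring,
    div_div_eq_mul_div]
  ring

theorem dLow_denom_pos {x y : ℝ} (hx : x ∈ Ioo 0 1) (hy : y ∈ Icc 0 1) :
    0 < y - x * (x + 2 * y - 2) := by
  obtain ⟨hx0, hx1⟩ := hx
  obtain ⟨hy0, hy1⟩ := hy
  have hval0 : 0 < x * (2 - x) := by nlinarith
  have hval1 : 0 < 1 - x ^ 2 := by nlinarith
  calc 0 < (1 - y) * (x * (2 - x)) + y * (1 - x ^ 2) := by nlinarith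
    _ = y - x * (x + 2 * y - 2) := by ring

theorem hasDerivAt_dLow {x y : ℝ} (hQ : y - x * (x + 2 * y - 2) ≠ 0) :
    HasDerivAt (dLow y)
      (-3 * (y - x) * (x + 2 * y - y ^ 2 - 2 * x * y) / (y - x * (x + 2 * y - 2)) ^ 2) x := by
  rw [dLow_eq_div]
  have hnum : HasDerivAt (fun t => 3 / 2 * (y - t) ^ 2) (3 / 2 * (2 * (y - x) * -1)) x := by
    simpa using (((hasDerivAt_id x).const_sub y).pow 2).const_mul (3 / 2 : ℝ)
  have hden : HasDerivAt (fun t => y - t * (t + 2 * y - 2)) (-(2 * x + 2 * y - 2)) x :=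
    (((hasDerivAt_id' x).mul (((hasDerivAt_id' x).add_const (2 * y)).sub_const 2)).const_sub
      y).congr_deriv (by ring)
  exact (hnum.div hden hQ).congr_deriv (by ring)

theorem hasDerivAt_mul_log_div (c : ℝ) {x : ℝ} (hx : x ≠ 0) :
    HasDerivAt (fun t => c * log (c / t)) (-c / x) x := by
  rcases eq_or_ne c 0 with rfl | hc
  · simpa using hasDerivAt_const x (0 : ℝ)
  · have := (((hasDerivAt_inv hx).const_mul c).log (mul_ne_zero hc (inv_ne_zero hx))).const_mul c
    simp only [div_eq_mul_inv]
    exact this.congr_deriv (by field_simp)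

theorem hasDerivAt_bernKL (y : ℝ) {x : ℝ} (hx0 : x ≠ 0) (hx1 : x ≠ 1) :
    HasDerivAt (bernKL y) ((x - y) / (x * (1 - x))) x := by
  have h1x : 1 - x ≠ 0 := sub_ne_zero.2 hx1.symm
  have hsecond := (hasDerivAt_mul_log_div (1 - y) h1x).comp x ((hasDerivAt_id x).const_sub 1)
  exact ((hasDerivAt_mul_log_div y hx0).add hsecond).congr_deriv (by field_simp; ring)

theorem stmt_9 (x y : ℝ) (hx : x ∈ Set.Ioo (0 : ℝ) 1) (hy : y ∈ Set.Ioo (0 : ℝ) 1)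
    (hxy : x ≤ y) :
    HasDerivAt (fun t => dLow y t - bernKL y t)
      ((1 - x * (1 - x)) * (y - x) ^ 3 /
        (x * (1 - x) * (y - x * (x + 2 * y - 2)) ^ 2)) x ∧
    0 ≤ (1 - x * (1 - x)) * (y - x) ^ 3 /
        (x * (1 - x) * (y - x * (x + 2 * y - 2)) ^ 2) := by
  have hQ := dLow_denom_pos hx (Ioo_subset_Icc_self hy)
  obtain ⟨hx0, hx1⟩ := hx
  refine ⟨((hasDerivAt_dLow hQ.ne').sub
    (hasDerivAt_bernKL y hx0.ne' hx1.ne)).congr_deriv ?_, ?_⟩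
  · have hvar : x * (1 - x) ≠ 0 := mul_ne_zero hx0.ne' (by linarith)
    rw [div_sub_div _ _ (pow_ne_zero 2 hQ.ne') hvar, div_eq_div_iff
      (mul_ne_zero (pow_ne_zero 2 hQ.ne') hvar) (mul_ne_zero hvar (pow_ne_zero 2 hQ.ne'))]
    ring
  · have hcoef : 0 < 1 - x * (1 - x) := by nlinarith
    have h1x : 0 < 1 - x := by linarith
    exact div_nonneg (mul_nonneg hcoef.le (pow_nonneg (sub_nonneg.2 hxy) 3)) (by positivity)
end

section
/- Middle-term bound: let β ∈ (0, 1/2], q ≥ 2 an integer, V(x) = (x(1-x))^β, and ψ_i(x) = Σ_{j=i+1}^q C(q,j)x^j(1-x)^{q-j}. Then for all x ∈ [1/2, 1], (1/q)·V(ψ_{⌈qx⌉-1}(x)) ≤ (2x(1-x))^β / √(2q). -/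
/-- Binomial tail probability `ψ_i(x) = P(Bin(q,x) ≥ i+1)`. -/
noncomputable def psi (q i : ℕ) (x : ℝ) : ℝ :=
  ∑ j ∈ Finset.Icc (i + 1) q, (q.choose j : ℝ) * x ^ j * (1 - x) ^ (q - j)

/-!
Every tail `t = ψ_i(x)` with `i < q` lies in `[x^q, 1]`. If `x^q ≥ 1/2`, then `t(1-t)` is at most
`x^q(1-x^q) ≤ x · q(1-x)` by Bernoulli's inequality; otherwise Bernoulli gives `q(1-x) > 1/2`, so
`t(1-t) ≤ 1/4 ≤ qx(1-x)`. Hence `ψ(1-ψ) ≤ (q/2)·2x(1-x)`, and raising to the power `β ≤ 1/2`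
turns the factor `(q/2)^β` into at most `√(q/2) = q/√(2q)`.
-/

section Psi

variable {q i : ℕ} {x : ℝ}

lemma binomial_term_nonneg (q j : ℕ) (hx0 : 0 ≤ x) (hx1 : x ≤ 1) :
    0 ≤ (q.choose j : ℝ) * x ^ j * (1 - x) ^ (q - j) := by
  have : 0 ≤ 1 - x := by linarith
  positivity

lemma pow_le_psi (hi : i < q) (hx0 : 0 ≤ x) (hx1 : x ≤ 1) : x ^ q ≤ psi q i x := by
  have hmem : q ∈ Finset.Icc (i + 1) q := Finset.mem_Icc.mpr ⟨hi, le_rfl⟩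
  calc x ^ q = (q.choose q : ℝ) * x ^ q * (1 - x) ^ (q - q) := by simp
    _ ≤ psi q i x :=
      Finset.single_le_sum (fun j _ => binomial_term_nonneg q j hx0 hx1) hmem

lemma psi_le_one (hx0 : 0 ≤ x) (hx1 : x ≤ 1) : psi q i x ≤ 1 := by
  calc psi q i x
      ≤ ∑ j ∈ Finset.range (q + 1), (q.choose j : ℝ) * x ^ j * (1 - x) ^ (q - j) := by
        refine Finset.sum_le_sum_of_subset_of_nonneg (fun j hj => ?_)
          (fun j _ _ => binomial_term_nonneg q j hx0 hx1)
        simp only [Finset.mem_Icc, Finset.mem_range] at hj ⊢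
        omega
    _ = (x + (1 - x)) ^ q := by
        rw [add_pow]
        exact Finset.sum_congr rfl fun j _ => by ring
    _ = 1 := by simp

end Psi

lemma one_sub_pow_le_mul_one_sub {x : ℝ} (hx0 : 0 ≤ x) (q : ℕ) :
    1 - x ^ q ≤ q * (1 - x) := by
  have := one_add_mul_le_pow (a := x - 1) (by linarith) q
  simp only [add_sub_cancel] at this
  linarith

lemma mul_one_sub_le_mul_one_sub_of_pow_le {q : ℕ} (hq : 1 ≤ q) {x t : ℝ}
    (hx : x ∈ Set.Icc (1 / 2 : ℝ) 1) (hxt : x ^ q ≤ t) (ht1 : t ≤ 1) :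
    t * (1 - t) ≤ q * x * (1 - x) := by
  obtain ⟨hx0, hx1⟩ := hx
  have hbern := one_sub_pow_le_mul_one_sub (by linarith : (0 : ℝ) ≤ x) q
  by_cases hhalf : 1 / 2 ≤ x ^ q
  · have hxq : x ^ q ≤ x := pow_le_of_le_one (by linarith) hx1 (by omega)
    calc t * (1 - t) ≤ x ^ q * (1 - x ^ q) := by nlinarith
      _ ≤ x * (q * (1 - x)) := mul_le_mul hxq hbern (by linarith) (by linarith)
      _ = q * x * (1 - x) := by ring
  · nlinarith [sq_nonneg (t - 1 / 2)]

lemma one_div_mul_rpow_le {q s u β : ℝ} (hq : 2 ≤ q) (hβ0 : 0 ≤ β) (hβ : β ≤ 1 / 2)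
    (hs : 0 ≤ s) (hu : 0 ≤ u) (hsu : s ≤ q / 2 * u) :
    1 / q * s ^ β ≤ u ^ β / Real.sqrt (2 * q) := by
  have hq2 : 1 ≤ q / 2 := by linarith
  have hsqrt : Real.sqrt (q / 2) * Real.sqrt (2 * q) = q := by
    rw [← Real.sqrt_mul (by linarith), show q / 2 * (2 * q) = q ^ 2 by ring,
      Real.sqrt_sq (by linarith)]
  have hpos : 0 < Real.sqrt (2 * q) := Real.sqrt_pos.mpr (by linarith)
  calc 1 / q * s ^ β ≤ 1 / q * ((q / 2) ^ β * u ^ β) := by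
        rw [← Real.mul_rpow (by linarith) hu]
        gcongr
    _ ≤ 1 / q * (Real.sqrt (q / 2) * u ^ β) := by
        rw [Real.sqrt_eq_rpow]
        gcongr
    _ = u ^ β / Real.sqrt (2 * q) := by
        rw [eq_div_iff hpos.ne']
        calc 1 / q * (Real.sqrt (q / 2) * u ^ β) * Real.sqrt (2 * q)
            = 1 / q * (Real.sqrt (q / 2) * Real.sqrt (2 * q)) * u ^ β := by ring
          _ = u ^ β := by rw [hsqrt, one_div_mul_cancel (by linarith), one_mul]

theorem stmt_12 (q : ℕ) (hq : 2 ≤ q) (β : ℝ) (hβ : β ∈ Set.Ioc (0 : ℝ) (1 / 2))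
    (x : ℝ) (hx : x ∈ Set.Icc (1 / 2 : ℝ) 1) :
    (1 / (q : ℝ)) *
        (psi q (⌈(q : ℝ) * x⌉₊ - 1) x * (1 - psi q (⌈(q : ℝ) * x⌉₊ - 1) x)) ^ β
      ≤ (2 * x * (1 - x)) ^ β / Real.sqrt (2 * q) := by
  obtain ⟨hx0, hx1⟩ := hx
  set t := psi q (⌈(q : ℝ) * x⌉₊ - 1) x
  have hceil : ⌈(q : ℝ) * x⌉₊ ≤ q :=
    Nat.ceil_le.mpr (mul_le_of_le_one_right (Nat.cast_nonneg q) hx1)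
  have hxt : x ^ q ≤ t := pow_le_psi (by omega) (by linarith) hx1
  have ht1 : t ≤ 1 := psi_le_one (by linarith) hx1
  have hvar : t * (1 - t) ≤ q / 2 * (2 * x * (1 - x)) := by
    have := mul_one_sub_le_mul_one_sub_of_pow_le (by omega) ⟨hx0, hx1⟩ hxt ht1
    linarith
  have ht0 : 0 ≤ t := (pow_nonneg (by linarith) q).trans hxt
  exact one_div_mul_rpow_le (by exact_mod_cast hq) hβ.1.le hβ.2
    (mul_nonneg ht0 (by linarith)) (by nlinarith) hvar
end

section
/- Duality of erasure indicator: for an integer m ≥ 1, 0 ≤ i ≤ m-1, 0 ≤ d ≤ m, and prime power q, the erasure probability ρ(m,i,d,q) = P(e_1 ∉ colspace(G_S^{(i)})), where G^{(i)} is a uniformly random full-rank (m-i)×m matrix over 𝔽_q and S is any fixed d-element subset of columns, satisfies ρ(m,i,d,q) = 1 - ρ(m, m-i-1, m-d, q). -/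
/-!
Augment a full-rank `k × m` matrix `G` to `[e₁ | G]` and pass to its kernel `D ⊆ F^(m+1)`, of
dimension `m + 1 - k`. Then `e₁` lies in the span of the columns of `G` indexed by `S` iff `D`
contains a vector supported on `{0} ∪ S` (shifted by one) with nonzero `0`-th coordinate. The
possible kernels `D` are the "admissible" subspaces, and each is the kernel for equally many `G`
(the stabiliser of `e₁` in `GL_k` acts simply transitively on them), so `ρ` is a proportion of
admissible subspaces.

The dot-product orthogonal complement `D ↦ Dᗮ` swaps the dimensions `m + 1 - k` and `k` and
preserves admissibility, and the event for `D` and `S` is the negation of the event for `Dᗮ`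
and `Sᶜ`: two such vectors `x ∈ D`, `y ∈ Dᗮ` would have `x ⬝ᵥ y = x₀ y₀ ≠ 0`, and conversely
`x ↦ x₀` vanishing on `D ∩ {x | supp x ⊆ {0} ∪ S}` puts `e₀` in `Dᗮ + {y | supp y ⊆ Sᶜ}`.
Since `ρ` only depends on `|S|` (permute the columns), `|Sᶜ| = m - d` gives the theorem.
-/

open scoped Classical

/-- The fraction of uniformly random full-rank `k × m` matrices `G` over `F` for which
the first standard basis vector `e₁` is **not** in the column space of the submatrix `G_S`
formed by keeping the columns indexed by `S`. -/
noncomputable def erasureProb (F : Type) [Field F] [Fintype F] (k m : ℕ)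
    (S : Finset (Fin m)) : ℝ :=
  ((Finset.univ.filter fun G : Matrix (Fin k) (Fin m) F =>
      G.rank = k ∧
        ¬∃ v : {a // a ∈ S} → F,
            (G.submatrix id (fun s : {a // a ∈ S} => (s : Fin m))).mulVec v =
              fun r : Fin k => if (r : ℕ) = 0 then 1 else 0).card : ℝ) /
    ((Finset.univ.filter fun G : Matrix (Fin k) (Fin m) F => G.rank = k).card : ℝ)

open Module Matrix

namespace Submodule

variable {F ι : Type*} [Field F] [Fintype ι] [DecidableEq ι] {U : Submodule F (ι → F)}

def dotOrthogonal (U : Submodule F (ι → F)) : Submodule F (ι → F) :=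
  U.dualAnnihilator.comap (dotProductEquiv F ι).toLinearMap

theorem mem_dotOrthogonal {y : ι → F} : y ∈ U.dotOrthogonal ↔ ∀ x ∈ U, y ⬝ᵥ x = 0 := by
  simp [dotOrthogonal, mem_dualAnnihilator]

theorem dotOrthogonal_eq_map (U : Submodule F (ι → F)) :
    U.dotOrthogonal = U.dualAnnihilator.map (dotProductEquiv F ι).symm.toLinearMap :=
  comap_equiv_eq_map_symm _ _

theorem finrank_dotOrthogonal_add_finrank (U : Submodule F (ι → F)) :
    finrank F U.dotOrthogonal + finrank F U = Fintype.card ι := by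
  rw [dotOrthogonal_eq_map, LinearEquiv.finrank_map_eq, add_comm,
    Subspace.finrank_add_finrank_dualAnnihilator_eq, finrank_fintype_fun_eq_card]

theorem dotOrthogonal_inf (U W : Submodule F (ι → F)) :
    (U ⊓ W).dotOrthogonal = U.dotOrthogonal ⊔ W.dotOrthogonal := by
  simp only [dotOrthogonal_eq_map, Subspace.dualAnnihilator_inf_eq, map_sup]

theorem dotOrthogonal_dotOrthogonal (U : Submodule F (ι → F)) :
    U.dotOrthogonal.dotOrthogonal = U := by
  refine (eq_of_le_of_finrank_eq (fun x hx => ?_) ?_).symm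
  · exact mem_dotOrthogonal.2 fun y hy => dotProduct_comm x y ▸ mem_dotOrthogonal.1 hy x hx
  · have h₁ := finrank_dotOrthogonal_add_finrank U
    have h₂ := finrank_dotOrthogonal_add_finrank U.dotOrthogonal
    omega

theorem dotOrthogonal_pi_bot (s : Set ι) :
    (Submodule.pi sᶜ fun _ => (⊥ : Submodule F F)).dotOrthogonal =
      Submodule.pi s fun _ => ⊥ := by
  ext y
  simp only [mem_dotOrthogonal, mem_pi, Set.mem_compl_iff, mem_bot]
  refine ⟨fun h j hj => ?_, fun h x hx => ?_⟩
  · simpa using h (Pi.single j 1) fun i hi => Pi.single_eq_of_ne (by rintro rfl; exact hi hj) _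
  · refine Finset.sum_eq_zero fun j _ => ?_
    by_cases hj : j ∈ s
    · simp [h j hj]
    · simp [hx j hj]

theorem exists_mem_apply_ne_zero_iff (U : Submodule F (ι → F)) (o : ι) :
    (∃ x ∈ U, x o ≠ 0) ↔ Pi.single o 1 ∉ U.dotOrthogonal := by
  simp [mem_dotOrthogonal]

end Submodule

section Supported

variable {F ι : Type*} [Field F] [Fintype ι] [DecidableEq ι]

def ExistsSupportedAt (D : Submodule F (ι → F)) (o : ι) (s : Set ι) : Prop :=
  ∃ x ∈ D, x o ≠ 0 ∧ ∀ j ∉ s, x j = 0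

theorem existsSupportedAt_iff_not_dotOrthogonal (D : Submodule F (ι → F)) {o : ι} {s : Set ι}
    (ho : o ∈ s) :
    ExistsSupportedAt D o s ↔ ¬ ExistsSupportedAt D.dotOrthogonal o (insert o sᶜ) := by
  have hD : ExistsSupportedAt D o s ↔
      ∃ x ∈ D ⊓ Submodule.pi sᶜ (fun _ => (⊥ : Submodule F F)), x o ≠ 0 := by
    simp only [ExistsSupportedAt, Submodule.mem_inf, Submodule.mem_pi, Set.mem_compl_iff,
      Submodule.mem_bot]
    exact exists_congr fun x => by tauto
  rw [hD, Submodule.exists_mem_apply_ne_zero_iff, Submodule.dotOrthogonal_inf,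
    Submodule.dotOrthogonal_pi_bot, not_iff_not, Submodule.mem_sup]
  constructor
  · rintro ⟨y, hy, z, hz, hyz⟩
    simp only [Submodule.mem_pi, Submodule.mem_bot] at hz
    refine ⟨y, hy, fun hyo => ?_, fun j hj => ?_⟩
    · simpa [hyo, hz o ho] using congr_fun hyz o
    · simp only [Set.mem_insert_iff, Set.mem_compl_iff, not_or, not_not] at hj
      simpa [hj.1, hz j hj.2] using congr_fun hyz j
  · rintro ⟨y, hy, hyo, hys⟩
    refine ⟨(y o)⁻¹ • y, Submodule.smul_mem _ _ hy, Pi.single o 1 - (y o)⁻¹ • y,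
      Submodule.mem_pi.2 fun j hj => (Submodule.mem_bot F).2 ?_, add_sub_cancel _ _⟩
    rcases eq_or_ne j o with rfl | hjo
    · simp [hyo]
    · simp [hjo, hys j (by simp [hjo, hj])]

/-- The kernels of the augmented matrices `[e₁ | G]` with `G` of full row rank are exactly the
admissible subspaces of the right dimension. -/
def Admissible (o : ι) (D : Submodule F (ι → F)) : Prop :=
  Pi.single o 1 ∉ D ∧ ∃ x ∈ D, x o ≠ 0

theorem admissible_dotOrthogonal_iff {o : ι} {D : Submodule F (ι → F)} :
    Admissible o D.dotOrthogonal ↔ Admissible o D := by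
  rw [Admissible, Admissible, Submodule.exists_mem_apply_ne_zero_iff,
    Submodule.exists_mem_apply_ne_zero_iff, Submodule.dotOrthogonal_dotOrthogonal]
  tauto

end Supported

section LinearEquiv

variable {K V W : Type*} [Field K] [AddCommGroup V] [Module K V] [AddCommGroup W] [Module K W]

theorem exists_linearEquiv_apply_eq [FiniteDimensional K V] [FiniteDimensional K W]
    (h : finrank K V = finrank K W) {x : V} {y : W} (hx : x ≠ 0) (hy : y ≠ 0) :
    ∃ g : V ≃ₗ[K] W, g x = y := by
  let e := LinearEquiv.ofFinrankEq V W h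
  have hex : e x ≠ 0 := (map_ne_zero_iff e e.injective).2 hx
  obtain ⟨g, hg⟩ := Submodule.exists_linearEquiv_restrict_eq
    ((LinearEquiv.toSpanNonzeroSingleton K W (e x) hex).symm ≪≫ₗ
      LinearEquiv.toSpanNonzeroSingleton K W y hy)
  have h1 : (LinearEquiv.toSpanNonzeroSingleton K W (e x) hex).symm
      ⟨e x, Submodule.mem_span_singleton_self _⟩ = 1 := by
    rw [LinearEquiv.symm_apply_eq, LinearEquiv.toSpanNonzeroSingleton_one]
  refine ⟨e ≪≫ₗ g, ?_⟩
  simpa [h1] using (hg ⟨e x, Submodule.mem_span_singleton_self _⟩).symm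

theorem exists_surjective_ker_eq_apply_eq [FiniteDimensional K V] [FiniteDimensional K W]
    {D : Submodule K V} {v : V} {w : W} (hv : v ∉ D) (hw : w ≠ 0)
    (hdim : finrank K D + finrank K W = finrank K V) :
    ∃ p : V →ₗ[K] W, Function.Surjective p ∧ LinearMap.ker p = D ∧ p v = w := by
  have hQ : finrank K (V ⧸ D) = finrank K W := by
    have := D.finrank_quotient_add_finrank
    omega
  obtain ⟨g, hg⟩ := exists_linearEquiv_apply_eq hQ (x := D.mkQ v)
    (by simpa [Submodule.Quotient.mk_eq_zero] using hv) hw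
  exact ⟨g.toLinearMap ∘ₗ D.mkQ, g.surjective.comp D.mkQ_surjective,
    by rw [LinearEquiv.ker_comp, Submodule.ker_mkQ], hg⟩

theorem exists_linearEquiv_comp_eq {p L : V →ₗ[K] W} (hp : Function.Surjective p)
    (hL : Function.Surjective L) (h : LinearMap.ker L = LinearMap.ker p) :
    ∃ B : W ≃ₗ[K] W, L = B.toLinearMap ∘ₗ p := by
  refine ⟨(p.quotKerEquivOfSurjective hp).symm ≪≫ₗ Submodule.quotEquivOfEq _ _ h.symm ≪≫ₗ
    L.quotKerEquivOfSurjective hL, LinearMap.ext fun x => ?_⟩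
  simp

theorem natCard_surjective_ker_eq {p : V →ₗ[K] W} (hp : Function.Surjective p) (v : V) :
    Nat.card {L : V →ₗ[K] W //
        L v = p v ∧ Function.Surjective L ∧ LinearMap.ker L = LinearMap.ker p} =
      Nat.card {B : W ≃ₗ[K] W // B (p v) = p v} := by
  refine (Nat.card_eq_of_bijective (fun B => ⟨B.1.toLinearMap ∘ₗ p, B.2,
    B.1.surjective.comp hp, LinearEquiv.ker_comp _ _⟩) ⟨fun B B' h => ?_, fun L => ?_⟩).symm
  · have := (LinearMap.cancel_right hp).1 (congrArg Subtype.val h)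
    exact Subtype.ext (LinearEquiv.toLinearMap_injective this)
  · obtain ⟨B, hB⟩ := exists_linearEquiv_comp_eq hp L.2.2.1 L.2.2.2
    refine ⟨⟨B, ?_⟩, Subtype.ext hB.symm⟩
    simpa [hB] using L.2.1

end LinearEquiv

theorem Matrix.rank_eq_card_iff_surjective {F m n : Type*} [Field F] [Fintype m] [Fintype n]
    (A : Matrix m n F) : A.rank = Fintype.card m ↔ Function.Surjective A.mulVecLin := by
  rw [← LinearMap.range_eq_top, Matrix.rank]
  refine ⟨fun h => Submodule.eq_top_of_finrank_eq ?_, fun h => ?_⟩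
  · rw [h, finrank_fintype_fun_eq_card]
  · rw [h, finrank_top, finrank_fintype_fun_eq_card]

theorem Matrix.exists_rank_eq {F : Type*} [Field F] {k m : ℕ} (h : k ≤ m) :
    ∃ G : Matrix (Fin k) (Fin m) F, G.rank = k := by
  let G := LinearMap.toMatrix' (LinearMap.funLeft F F (Fin.castLE h))
  have hG : G.mulVecLin = LinearMap.funLeft F F (Fin.castLE h) := by
    rw [← Matrix.toLin'_apply', Matrix.toLin'_toMatrix']
  have hsurj : Function.Surjective G.mulVecLin :=
    hG ▸ LinearMap.funLeft_surjective_of_injective F F _ (Fin.castLE_injective h)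
  exact ⟨G, by simpa using G.rank_eq_card_iff_surjective.2 hsurj⟩

theorem Matrix.exists_submatrix_mulVec_eq_iff {R α β : Type*} [CommSemiring R] [Fintype β]
    (G : Matrix α β R) (S : Finset β) (w : α → R) :
    (∃ v : {j // j ∈ S} → R, G.submatrix id (↑) *ᵥ v = w) ↔
      ∃ u : β → R, (∀ j ∉ S, u j = 0) ∧ G *ᵥ u = w := by
  have restrict (u : β → R) (hu : ∀ j ∉ S, u j = 0) :
      G.submatrix id (↑) *ᵥ (fun j : {j // j ∈ S} => u j) = G *ᵥ u := by
    ext r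
    simp only [mulVec, dotProduct, submatrix_apply, id_eq]
    rw [Finset.sum_coe_sort S fun j => G r j * u j]
    exact Finset.sum_subset (Finset.subset_univ S) fun j _ hj => by simp [hu j hj]
  constructor
  · rintro ⟨v, rfl⟩
    refine ⟨fun j => if h : j ∈ S then v ⟨j, h⟩ else 0, fun j hj => dif_neg hj, ?_⟩
    rw [← restrict _ fun j hj => dif_neg hj]
    simp
  · rintro ⟨u, hu, rfl⟩
    exact ⟨_, restrict u hu⟩

theorem Matrix.exists_mulVec_submatrix_eq_iff {R α β : Type*} [CommSemiring R] [Fintype β]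
    (G : Matrix α β R) {σ : Equiv.Perm β} {S T : Finset β} (hσ : ∀ j, σ j ∈ S ↔ j ∈ T)
    (w : α → R) :
    (∃ u, (∀ j ∉ T, u j = 0) ∧ G.submatrix id σ *ᵥ u = w) ↔
      ∃ u, (∀ j ∉ S, u j = 0) ∧ G *ᵥ u = w := by
  constructor
  · rintro ⟨u, hu, rfl⟩
    refine ⟨u ∘ σ.symm, fun j hj => hu _ ?_, by rw [submatrix_mulVec_equiv]; rfl⟩
    rwa [← hσ, Equiv.apply_symm_apply]
  · rintro ⟨u, hu, rfl⟩
    refine ⟨u ∘ σ, fun j hj => hu _ ((hσ j).not.2 hj), ?_⟩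
    rw [submatrix_mulVec_equiv]
    simp [Function.comp_def]

theorem Fin.forall_notMem_insert_zero_image_succ {α : Type*} [Zero α] {m : ℕ}
    {x : Fin (m + 1) → α} {S : Set (Fin m)} :
    (∀ j ∉ insert 0 (Fin.succ '' S), x j = 0) ↔ ∀ j ∉ S, x j.succ = 0 := by
  rw [Fin.forall_fin_succ]
  simp only [Set.mem_insert_iff, true_or, not_true_eq_false, IsEmpty.forall_iff, true_and,
    Fin.succ_ne_zero, false_or, (Fin.succ_injective _).mem_set_image]

theorem Fin.insert_zero_compl_insert_zero_image_succ {m : ℕ} (S : Set (Fin m)) :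
    insert 0 (insert 0 (Fin.succ '' S))ᶜ = insert 0 (Fin.succ '' Sᶜ) := by
  ext j
  refine Fin.cases ?_ (fun j => ?_) j
  · simp
  · simp [Fin.succ_ne_zero, (Fin.succ_injective _).mem_set_image]

open Finset in
theorem Finset.card_filter_comp_eq_mul {α β : Type*} [DecidableEq β] {s : Finset α}
    {t : Finset β} {f : α → β} {c : ℕ} (hf : ∀ a ∈ s, f a ∈ t)
    (hc : ∀ b ∈ t, #{a ∈ s | f a = b} = c) (P : β → Prop) [DecidablePred P] :
    #{a ∈ s | P (f a)} = c * #{b ∈ t | P b} := by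
  rw [card_eq_sum_card_fiberwise (t := {b ∈ t | P b}) fun a ha => by
    simp only [coe_filter, Set.mem_ofPred_eq] at ha ⊢; exact ⟨hf a ha.1, ha.2⟩]
  rw [sum_congr rfl fun b hb => ?_, sum_const, smul_eq_mul, mul_comm]
  rw [mem_filter] at hb
  rw [filter_filter, ← hc b hb.1]
  congr 1
  exact filter_congr fun a _ => by constructor <;> rintro ⟨h₁, h₂⟩ <;> simp_all

section Augment

variable {F : Type*} [Field F] {k m : ℕ} [NeZero k]

/-- The augmented matrix `[e₁ | G]`. -/
def augment (G : Matrix (Fin k) (Fin m) F) : (Fin (m + 1) → F) →ₗ[F] Fin k → F :=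
  Matrix.toLin' (Matrix.of fun r => Fin.cons ((Pi.single 0 1 : Fin k → F) r) (G r))

theorem augment_apply (G : Matrix (Fin k) (Fin m) F) (x : Fin (m + 1) → F) :
    augment G x = x 0 • Pi.single 0 1 + G *ᵥ Fin.tail x := by
  ext r
  simp [augment, Matrix.mulVec, dotProduct, Fin.sum_univ_succ, Fin.tail, mul_comm]

theorem augment_single_zero (G : Matrix (Fin k) (Fin m) F) :
    augment G (Pi.single 0 1) = Pi.single 0 1 := by
  have : Fin.tail (Pi.single 0 1 : Fin (m + 1) → F) = 0 :=
    funext fun j => Pi.single_eq_of_ne (Fin.succ_ne_zero j) _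
  simp [augment_apply, this]

theorem augment_injective : Function.Injective (augment (F := F) (k := k) (m := m)) := by
  intro G G' h
  ext r j
  exact congr_fun (congr_fun (Matrix.toLin'.injective h) r) j.succ

theorem exists_augment_eq (L : (Fin (m + 1) → F) →ₗ[F] Fin k → F)
    (hL : L (Pi.single 0 1) = Pi.single 0 1) :
    ∃ G : Matrix (Fin k) (Fin m) F, augment G = L := by
  refine ⟨(LinearMap.toMatrix' L).submatrix id Fin.succ, ?_⟩
  rw [augment, ← Matrix.toLin'_toMatrix' L]
  congr 1
  ext r j : 2
  refine Fin.cases ?_ (fun j => ?_) j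
  · simp [LinearMap.toMatrix'_apply, hL]
  · simp

theorem exists_mulVec_eq_single_iff (G : Matrix (Fin k) (Fin m) F) (S : Set (Fin m)) :
    (∃ u, (∀ j ∉ S, u j = 0) ∧ G *ᵥ u = Pi.single 0 1) ↔
      ∃ x ∈ LinearMap.ker (augment G), x 0 ≠ 0 ∧ ∀ j ∉ S, x j.succ = 0 := by
  constructor
  · rintro ⟨u, huS, hu⟩
    refine ⟨Fin.cons (-1) u, ?_, by simp, fun j hj => by simpa using huS j hj⟩
    simp [augment_apply, hu]
  · rintro ⟨x, hx, hx0, hxS⟩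
    refine ⟨-(x 0)⁻¹ • Fin.tail x, fun j hj => by simp [Fin.tail, hxS j hj], ?_⟩
    rw [LinearMap.mem_ker, augment_apply, add_eq_zero_iff_neg_eq] at hx
    rw [mulVec_smul, ← hx, smul_neg, neg_smul, neg_neg, smul_smul, inv_mul_cancel₀ hx0, one_smul]

theorem exists_mem_ker_augment_iff (G : Matrix (Fin k) (Fin m) F) :
    (∃ x ∈ LinearMap.ker (augment G), x 0 ≠ 0) ↔ Pi.single 0 1 ∈ LinearMap.range G.mulVecLin := by
  simpa using (exists_mulVec_eq_single_iff G Set.univ).symm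

theorem rank_eq_iff_surjective_augment {G : Matrix (Fin k) (Fin m) F}
    (hG : ∃ x ∈ LinearMap.ker (augment G), x 0 ≠ 0) :
    G.rank = k ↔ Function.Surjective (augment G) := by
  obtain ⟨u, hu : G *ᵥ u = _⟩ := (exists_mem_ker_augment_iff G).1 hG
  rw [show G.rank = k ↔ _ by simpa using G.rank_eq_card_iff_surjective]
  refine ⟨fun h y => ?_, fun h y => ?_⟩
  · obtain ⟨v, rfl⟩ := h y
    exact ⟨Fin.cons 0 v, by simp [augment_apply]⟩
  · obtain ⟨x, rfl⟩ := h y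
    exact ⟨x 0 • u + Fin.tail x, by simp [augment_apply, mulVec_add, mulVec_smul, hu]⟩

theorem admissible_ker_augment {G : Matrix (Fin k) (Fin m) F} (hG : G.rank = k) :
    Admissible 0 (LinearMap.ker (augment G)) ∧
      finrank F (LinearMap.ker (augment G)) + k = m + 1 := by
  have hsurj : Function.Surjective G.mulVecLin := by
    simpa [hG] using G.rank_eq_card_iff_surjective
  have hker := (exists_mem_ker_augment_iff G).2 (hsurj _)
  refine ⟨⟨fun h => ?_, hker⟩, ?_⟩
  · rw [LinearMap.mem_ker, augment_single_zero] at h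
    exact one_ne_zero (congr_fun h 0)
  · have := (augment G).finrank_range_add_finrank_ker
    rw [LinearMap.range_eq_top.2 ((rank_eq_iff_surjective_augment hker).1 hG)] at this
    simp only [finrank_top, finrank_fintype_fun_eq_card, Fintype.card_fin] at this
    omega

theorem exists_submatrix_mulVec_eq_iff_existsSupportedAt (G : Matrix (Fin k) (Fin m) F)
    (S : Finset (Fin m)) :
    (∃ v : {a // a ∈ S} → F, G.submatrix id (fun s : {a // a ∈ S} => (s : Fin m)) *ᵥ v =
        fun r : Fin k => if (r : ℕ) = 0 then 1 else 0) ↔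
      ExistsSupportedAt (LinearMap.ker (augment G)) 0 (insert 0 (Fin.succ '' S)) := by
  have he : (fun r : Fin k => if (r : ℕ) = 0 then (1 : F) else 0) = Pi.single 0 1 := by
    ext r
    simp [Pi.single_apply, Fin.val_eq_zero_iff]
  simp only [he, Matrix.exists_submatrix_mulVec_eq_iff,
    ExistsSupportedAt, Fin.forall_notMem_insert_zero_image_succ]
  exact exists_mulVec_eq_single_iff G S

theorem natCard_fiber_augment {D : Submodule F (Fin (m + 1) → F)} (hD : Admissible 0 D)
    (hdim : finrank F D + k = m + 1) :
    Nat.card {G : Matrix (Fin k) (Fin m) F // G.rank = k ∧ LinearMap.ker (augment G) = D} =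
      Nat.card {B : (Fin k → F) ≃ₗ[F] (Fin k → F) // B (Pi.single 0 1) = Pi.single 0 1} := by
  obtain ⟨p, hp, rfl, hpe⟩ := exists_surjective_ker_eq_apply_eq hD.1
    (w := (Pi.single 0 1 : Fin k → F)) (by simp) (by simpa using hdim)
  have hrank {G : Matrix (Fin k) (Fin m) F} (hG : LinearMap.ker (augment G) = LinearMap.ker p) :=
    rank_eq_iff_surjective_augment (hG ▸ hD.2)
  rw [← hpe, ← natCard_surjective_ker_eq hp]
  refine Nat.card_eq_of_bijective (fun G => ⟨augment G, by rw [augment_single_zero, hpe],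
    (hrank G.2.2).1 G.2.1, G.2.2⟩) ⟨fun G G' h => ?_, fun L => ?_⟩
  · exact Subtype.ext (augment_injective (congrArg Subtype.val h))
  · obtain ⟨G, hG⟩ := exists_augment_eq L.1 (L.2.1.trans hpe)
    have hker : LinearMap.ker (augment G) = LinearMap.ker p := hG ▸ L.2.2.2
    exact ⟨⟨G, (hrank hker).2 (hG ▸ L.2.2.1), hker⟩, Subtype.ext hG⟩

end Augment

section Erasure

open Finset

variable {F : Type} [Field F] [Fintype F] {m : ℕ}

variable (F) in
noncomputable def admissibleSubspaces (k m : ℕ) : Finset (Submodule F (Fin (m + 1) → F)) :=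
  {D | Admissible 0 D ∧ finrank F D + k = m + 1}

theorem erasureProb_eq_card_div {k : ℕ} [NeZero k] (S : Finset (Fin m)) :
    erasureProb F k m S =
      #{D ∈ admissibleSubspaces F k m |
          ¬ ExistsSupportedAt D 0 (insert 0 (Fin.succ '' (S : Set (Fin m))))} /
        #(admissibleSubspaces F k m) := by
  set c := Nat.card {B : (Fin k → F) ≃ₗ[F] (Fin k → F) // B (Pi.single 0 1) = Pi.single 0 1}
  have hfib : ∀ D ∈ admissibleSubspaces F k m,
      #{G ∈ ({G | G.rank = k} : Finset (Matrix (Fin k) (Fin m) F)) |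
        LinearMap.ker (augment G) = D} = c := by
    intro D hD
    simp only [admissibleSubspaces, mem_filter, mem_univ, true_and] at hD
    refine Eq.trans ?_ (natCard_fiber_augment hD.1 hD.2)
    rw [filter_filter, Nat.card_eq_fintype_card, Fintype.card_subtype]
  have hcount := Finset.card_filter_comp_eq_mul (fun G hG => by
    simp only [mem_filter, mem_univ, true_and] at hG
    simpa [admissibleSubspaces] using admissible_ker_augment hG) hfib
  have hc : 0 < c := by
    have : Finite ((Fin k → F) ≃ₗ[F] (Fin k → F)) :=
      Finite.of_injective _ DFunLike.coe_injective
    have : Nonempty {B : (Fin k → F) ≃ₗ[F] (Fin k → F) // B (Pi.single 0 1) = Pi.single 0 1} :=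
      ⟨⟨LinearEquiv.refl F _, rfl⟩⟩
    exact Nat.card_pos
  have hall : #({G | G.rank = k} : Finset (Matrix (Fin k) (Fin m) F)) =
      c * #(admissibleSubspaces F k m) := by
    simpa using hcount fun _ => True
  rw [erasureProb, ← filter_filter]
  simp only [exists_submatrix_mulVec_eq_iff_existsSupportedAt]
  rw [hcount fun D => ¬ ExistsSupportedAt D 0 (insert 0 (Fin.succ '' (S : Set (Fin m)))), hall]
  push_cast
  rw [mul_div_mul_left _ _ (by positivity)]

theorem erasureProb_eq_one_sub_compl {k k' : ℕ} [NeZero k] [NeZero k'] (hkk' : k + k' = m + 1)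
    (S : Finset (Fin m)) : erasureProb F k m S = 1 - erasureProb F k' m Sᶜ := by
  let e := Function.Involutive.toPerm _ (Submodule.dotOrthogonal_dotOrthogonal (F := F)
    (ι := Fin (m + 1)))
  have hadm (D : Submodule F (Fin (m + 1) → F)) :
      D ∈ admissibleSubspaces F k m ↔ e D ∈ admissibleSubspaces F k' m := by
    have := D.finrank_dotOrthogonal_add_finrank
    show _ ↔ D.dotOrthogonal ∈ _
    simp only [admissibleSubspaces, mem_filter, mem_univ, true_and,
      admissible_dotOrthogonal_iff, Fintype.card_fin] at this ⊢
    exact and_congr_right fun _ => by omega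
  have hnum : #{D ∈ admissibleSubspaces F k m |
        ¬ ExistsSupportedAt D 0 (insert 0 (Fin.succ '' (S : Set (Fin m))))} =
      #{D ∈ admissibleSubspaces F k' m |
        ExistsSupportedAt D 0 (insert 0 (Fin.succ '' ((Sᶜ : Finset _) : Set (Fin m))))} := by
    refine card_equiv e fun D => ?_
    rw [mem_filter, mem_filter, hadm, existsSupportedAt_iff_not_dotOrthogonal D
      (Set.mem_insert _ _), not_not, Fin.insert_zero_compl_insert_zero_image_succ, coe_compl]
    rfl
  obtain ⟨G, hG⟩ := Matrix.exists_rank_eq (F := F) (k := k') (m := m)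
    (by have := NeZero.ne k; omega)
  have hpos : 0 < #(admissibleSubspaces F k' m) :=
    card_pos.2 ⟨_, by simpa [admissibleSubspaces] using admissible_ker_augment hG⟩
  rw [erasureProb_eq_card_div, erasureProb_eq_card_div, hnum, card_equiv e fun D => hadm D,
    eq_sub_iff_add_eq, ← add_div, ← Nat.cast_add, card_filter_add_card_filter_not,
    div_self (by positivity)]

open scoped Pointwise in
theorem erasureProb_congr_card {k : ℕ} {S T : Finset (Fin m)} (h : S.card = T.card) :
    erasureProb F k m S = erasureProb F k m T := by
  obtain ⟨σ, hσ⟩ := (Set.powersetCard.isPretransitive (α := Fin m) (n := T.card)).exists_smul_eq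
    ⟨T, rfl⟩ ⟨S, h⟩
  have hσS (j : Fin m) : σ j ∈ S ↔ j ∈ T := by
    have hσT : σ • T = S := by simpa using congrArg Subtype.val hσ
    rw [← hσT]
    exact Finset.smul_mem_smul_finset_iff σ
  rw [erasureProb, erasureProb]
  congr 2
  refine Finset.card_equiv (Matrix.reindex (Equiv.refl _) σ.symm) fun G => ?_
  simp only [Finset.mem_filter, Finset.mem_univ, true_and, Matrix.rank_reindex]
  simp only [Matrix.reindex_apply, Equiv.refl_symm, Equiv.symm_symm, Equiv.coe_refl,
    Matrix.exists_submatrix_mulVec_eq_iff]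
  rw [Matrix.exists_mulVec_submatrix_eq_iff G hσS]

end Erasure

theorem stmt_19_general (m i d : ℕ) (hm : 1 ≤ m) (hi : i ≤ m - 1)
    (F : Type) [Field F] [Fintype F]
    (S S' : Finset (Fin m)) (hS : S.card = d) (hS' : S'.card = m - d) :
    erasureProb F (m - i) m S = 1 - erasureProb F (i + 1) m S' := by
  have : NeZero (m - i) := ⟨by omega⟩
  rw [erasureProb_eq_one_sub_compl (k' := i + 1) (by omega) S, erasureProb_congr_card (T := S')]
  rw [Finset.card_compl, Fintype.card_fin, hS, hS']

theorem stmt_19 (q m i d : ℕ) (hm : 1 ≤ m) (hi : i ≤ m - 1) (hd : d ≤ m)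
    (F : Type) [Field F] [Fintype F] (hF : Fintype.card F = q)
    (S S' : Finset (Fin m)) (hS : S.card = d) (hS' : S'.card = m - d) :
    erasureProb F (m - i) m S = 1 - erasureProb F (i + 1) m S' :=
  stmt_19_general m i d hm hi F S S' hS hS'
end
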